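/- Let T = {(c1,c2,c3) ∈ ℝ³ : c1 ≥ c2 ≥ c3 ≥ 0 and c1 + c2 ≤ π} (the Weyl chamber tetrahedron) and let PE = {(c1,c2,c3) ∈ T : c1 + c2 ≥ π/2, c2 + c3 ≤ π/2, and c1 − c2 ≤ π/2} (the polyhedron of perfect entanglers). Then the Lebesgue volume of T equals π³/24 and the Lebesgue volume of PE equals π³/48; in particular the perfect entanglers occupy exactly half of the Weyl chamber. -/

import Mathlib

open Real MeasureTheory

/-- The Weyl chamber tetrahedron T. -/
def WeylChamber : Set (ℝ × ℝ × ℝ) :=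
  {p | p.1 ≥ p.2.1 ∧ p.2.1 ≥ p.2.2 ∧ p.2.2 ≥ 0 ∧ p.1 + p.2.1 ≤ π}

/-- The polyhedron of perfect entanglers inside the Weyl chamber. -/
def PEPolyhedron : Set (ℝ × ℝ × ℝ) :=
  {p | p ∈ WeylChamber ∧ p.1 + p.2.1 ≥ π / 2 ∧ p.2.1 + p.2.2 ≤ π / 2 ∧ p.1 - p.2.1 ≤ π / 2}

section AuxVolume
open Set

lemma volume_eq_iter (S : Set (ℝ×ℝ×ℝ)) (hS : MeasurableSet S) :
    volume S = ∫⁻ x, ∫⁻ y, volume {z | (x, y, z) ∈ S} := by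
  rw [MeasureTheory.Measure.volume_eq_prod, MeasureTheory.Measure.prod_apply hS]
  congr 1; funext x
  have h1 : MeasurableSet (Prod.mk x ⁻¹' S) := hS.preimage measurable_prodMk_left
  rw [MeasureTheory.Measure.volume_eq_prod, Measure.prod_apply h1]
  rfl

lemma lint_Ioc_ofReal {a b : ℝ} (hab : a ≤ b) (f : ℝ → ℝ) (hf : Continuous f)
    (h0 : ∀ x ∈ Set.Ioc a b, 0 ≤ f x) :
    ∫⁻ x in Set.Ioc a b, ENNReal.ofReal (f x) = ENNReal.ofReal (∫ x in a..b, f x) := by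
  rw [intervalIntegral.integral_of_le hab,
    ofReal_integral_eq_lintegral_ofReal (hf.integrableOn_Ioc)
      ((ae_restrict_iff' measurableSet_Ioc).2 (ae_of_all _ h0))]

lemma L1 {m : ℝ} (hm : 0 ≤ m) : ∫⁻ y in Iic m, ENNReal.ofReal y = ENNReal.ofReal (m^2/2) := by
  rw [← Set.Iic_union_Ioc_eq_Iic hm,
    lintegral_union measurableSet_Ioc (Set.Iic_disjoint_Ioc le_rfl)]
  have h1 : ∫⁻ y in Iic (0:ℝ), ENNReal.ofReal y = 0 := by
    rw [setLIntegral_congr_fun_ae measurableSet_Iic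
      (ae_of_all _ fun y (hy : y ≤ 0) => ENNReal.ofReal_eq_zero.2 hy)]
    simp
  rw [h1, zero_add, lint_Ioc_ofReal hm (fun y => y) continuous_id (fun x hx => le_of_lt hx.1)]
  simp [integral_id]

lemma L1' {m : ℝ} (hm : m ≤ 0) : ∫⁻ y in Iic m, ENNReal.ofReal y = 0 := by
  rw [setLIntegral_congr_fun_ae measurableSet_Iic
    (ae_of_all _ fun y (hy : y ≤ m) => ENNReal.ofReal_eq_zero.2 (hy.trans hm))]
  simp

lemma sliceT (x y : ℝ) :
    volume {z | (x, y, z) ∈ WeylChamber} =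
    if y ≤ x ∧ x + y ≤ π then ENNReal.ofReal y else 0 := by
  by_cases h : y ≤ x ∧ x + y ≤ π
  · have hs : {z | (x, y, z) ∈ WeylChamber} = Icc 0 y := by
      ext z
      simp only [WeylChamber, Set.mem_setOf_eq, Set.mem_Icc, ge_iff_le]
      exact ⟨fun ⟨_, h2, h3, _⟩ => ⟨h3, h2⟩, fun ⟨h3, h2⟩ => ⟨h.1, h2, h3, h.2⟩⟩
    rw [hs, Real.volume_Icc, if_pos h, sub_zero]
  · have hs : {z | (x, y, z) ∈ WeylChamber} = ∅ := by
      ext z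
      simp only [WeylChamber, Set.mem_setOf_eq, mem_empty_iff_false, iff_false, ge_iff_le]
      rintro ⟨h1, _, _, h4⟩; exact h ⟨h1, h4⟩
    rw [hs, if_neg h]; simp

lemma innerT (x : ℝ) :
    ∫⁻ y, volume {z | (x, y, z) ∈ WeylChamber} =
      ∫⁻ y in Iic (min x (π - x)), ENNReal.ofReal y := by
  rw [← lintegral_indicator measurableSet_Iic]
  refine lintegral_congr fun y => ?_
  rw [sliceT]
  by_cases hy : y ≤ x ∧ x + y ≤ π
  · rw [if_pos hy, Set.indicator_of_mem (by simpa [mem_Iic, le_min_iff] using ⟨hy.1, by linarith [hy.2]⟩)]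
  · rw [if_neg hy, Set.indicator_of_notMem]
    intro hmem
    simp only [mem_Iic, le_min_iff] at hmem
    exact hy ⟨hmem.1, by linarith [hmem.2]⟩

lemma measT : MeasurableSet WeylChamber := by
  have : WeylChamber = {p : ℝ×ℝ×ℝ | p.2.1 ≤ p.1} ∩ {p | p.2.2 ≤ p.2.1} ∩ {p | 0 ≤ p.2.2}
      ∩ {p | p.1 + p.2.1 ≤ π} := by
    ext p; simp only [WeylChamber, mem_setOf_eq, mem_inter_iff, ge_iff_le]; tauto
  rw [this]
  exact (((isClosed_le (by fun_prop) (by fun_prop)).inter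
    (isClosed_le (by fun_prop) (by fun_prop))).inter
    (isClosed_le (by fun_prop) (by fun_prop))).measurableSet.inter
    (isClosed_le (by fun_prop) (by fun_prop)).measurableSet

lemma intT : ∫ x in (0:ℝ)..(π/2), x^2/2 = π^3/48 := by
  rw [intervalIntegral.integral_div, integral_pow]
  ring

lemma volT : volume WeylChamber = ENNReal.ofReal (π^3/24) := by
  rw [volume_eq_iter _ measT, lintegral_congr innerT]
  have hpi := pi_pos
  have hind : ∀ x : ℝ, (∫⁻ y in Iic (min x (π - x)), ENNReal.ofReal y) =
      (Ioc 0 π).indicator (fun x => ∫⁻ y in Iic (min x (π - x)), ENNReal.ofReal y) x := by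
    intro x
    by_cases hx : x ∈ Ioc 0 π
    · rw [indicator_of_mem hx]
    · rw [indicator_of_notMem hx]
      simp only [mem_Ioc, not_and_or, not_lt, not_le] at hx
      rcases hx with h | h
      · exact L1' ((min_le_left _ _).trans h)
      · exact L1' ((min_le_right _ _).trans (by linarith))
  rw [lintegral_congr hind, lintegral_indicator measurableSet_Ioc,
    ← Set.Ioc_union_Ioc_eq_Ioc (le_of_lt (by positivity : (0:ℝ) < π/2)) (by linarith),
    lintegral_union measurableSet_Ioc (Set.Ioc_disjoint_Ioc_of_le le_rfl)]
  have e1 : ∫⁻ x in Ioc (0:ℝ) (π/2), ∫⁻ y in Iic (min x (π - x)), ENNReal.ofReal y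
      = ENNReal.ofReal (π^3/48) := by
    rw [setLIntegral_congr_fun_ae measurableSet_Ioc (ae_of_all _ fun x hx => by
      rw [min_eq_left (by simp only [mem_Ioc] at hx; linarith [hx.1, hx.2]),
        L1 (le_of_lt (by simp only [mem_Ioc] at hx; exact hx.1))])]
    rw [lint_Ioc_ofReal (by positivity) (fun x => x^2/2) (by fun_prop)
      (fun x hx => by positivity), intT]
  have e2 : ∫⁻ x in Ioc (π/2) π, ∫⁻ y in Iic (min x (π - x)), ENNReal.ofReal y
      = ENNReal.ofReal (π^3/48) := by
    rw [setLIntegral_congr_fun_ae measurableSet_Ioc (ae_of_all _ fun x hx => by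
      rw [min_eq_right (by simp only [mem_Ioc] at hx; linarith [hx.1, hx.2]),
        L1 (by simp only [mem_Ioc] at hx; linarith [hx.2])])]
    rw [lint_Ioc_ofReal (by linarith) (fun x => (π - x)^2/2) (by fun_prop)
      (fun x hx => by positivity)]
    rw [show (∫ x in (π/2)..π, (π - x)^2/2) = ∫ x in (π-π)..(π-π/2), x^2/2 from
      intervalIntegral.integral_comp_sub_left (fun u => u^2/2) π]
    rw [show π - π = (0:ℝ) by ring, show π - π/2 = π/2 by ring, intT]
  rw [e1, e2, ← ENNReal.ofReal_add (by positivity) (by positivity)]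
  ring_nf


lemma measPE : MeasurableSet PEPolyhedron := by
  have : PEPolyhedron = WeylChamber ∩ {p : ℝ×ℝ×ℝ | π/2 ≤ p.1 + p.2.1}
      ∩ {p | p.2.1 + p.2.2 ≤ π/2} ∩ {p | p.1 - p.2.1 ≤ π/2} := by
    ext p; simp only [PEPolyhedron, mem_setOf_eq, mem_inter_iff, ge_iff_le]; tauto
  rw [this]
  exact ((measT.inter (isClosed_le (by fun_prop) (by fun_prop)).measurableSet).inter
    (isClosed_le (by fun_prop) (by fun_prop)).measurableSet).inter
    (isClosed_le (by fun_prop) (by fun_prop)).measurableSet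

lemma slicePE (x y : ℝ) :
    volume {z | (x, y, z) ∈ PEPolyhedron} =
    if y ≤ x ∧ x + y ≤ π ∧ π/2 ≤ x + y ∧ x - y ≤ π/2 then
      ENNReal.ofReal (min y (π/2 - y)) else 0 := by
  by_cases h : y ≤ x ∧ x + y ≤ π ∧ π/2 ≤ x + y ∧ x - y ≤ π/2
  · have hs : {z | (x, y, z) ∈ PEPolyhedron} = Icc 0 (min y (π/2 - y)) := by
      ext z
      simp only [PEPolyhedron, WeylChamber, mem_setOf_eq, mem_Icc, ge_iff_le, le_min_iff]
      constructor
      · rintro ⟨⟨_, hzy, hz0, _⟩, _, hyz, _⟩; exact ⟨hz0, hzy, by linarith⟩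
      · rintro ⟨hz0, hzy, hz2⟩
        exact ⟨⟨h.1, hzy, hz0, h.2.1⟩, h.2.2.1, by linarith, h.2.2.2⟩
    rw [hs, Real.volume_Icc, if_pos h, sub_zero]
  · have hs : {z | (x, y, z) ∈ PEPolyhedron} = ∅ := by
      ext z
      simp only [PEPolyhedron, WeylChamber, mem_setOf_eq, mem_empty_iff_false, iff_false,
        ge_iff_le]
      rintro ⟨⟨h1, _, _, h4⟩, h5, _, h7⟩; exact h ⟨h1, h4, h5, h7⟩
    rw [hs, if_neg h]; simp

lemma innerPE (x : ℝ) :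
    ∫⁻ y, volume {z | (x, y, z) ∈ PEPolyhedron}
      = ∫⁻ y in Icc (max (π/2 - x) (x - π/2)) (min x (π - x)),
          ENNReal.ofReal (min y (π/2 - y)) := by
  rw [← lintegral_indicator measurableSet_Icc]
  refine lintegral_congr fun y => ?_
  rw [slicePE]
  by_cases hy : y ≤ x ∧ x + y ≤ π ∧ π/2 ≤ x + y ∧ x - y ≤ π/2
  · rw [if_pos hy, indicator_of_mem (mem_Icc.2
      ⟨max_le (by linarith [hy.2.2.1]) (by linarith [hy.2.2.2]),
       le_min hy.1 (by linarith [hy.2.1])⟩)]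
  · rw [if_neg hy, indicator_of_notMem]
    intro hmem
    obtain ⟨h1, h2⟩ := mem_Icc.1 hmem
    have ha1 : π/2 - x ≤ y := le_trans (le_max_left _ _) h1
    have ha2 : x - π/2 ≤ y := le_trans (le_max_right _ _) h1
    have hb1 : y ≤ x := le_trans h2 (min_le_left _ _)
    have hb2 : y ≤ π - x := le_trans h2 (min_le_right _ _)
    exact hy ⟨hb1, by linarith, by linarith, by linarith⟩

lemma Hval {a : ℝ} (ha0 : 0 ≤ a) (ha : a ≤ π/4) :
    ∫⁻ y in Icc a (π/2 - a), ENNReal.ofReal (min y (π/2 - y))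
      = ENNReal.ofReal (π^2/16 - a^2) := by
  have hpi := pi_pos
  rw [← Measure.restrict_congr_set Ioc_ae_eq_Icc,
    ← Set.Ioc_union_Ioc_eq_Ioc ha (by linarith),
    lintegral_union measurableSet_Ioc (Set.Ioc_disjoint_Ioc_of_le le_rfl)]
  have e1 : ∫⁻ y in Ioc a (π/4), ENNReal.ofReal (min y (π/2 - y))
      = ENNReal.ofReal (((π/4)^2 - a^2)/2) := by
    rw [setLIntegral_congr_fun_ae measurableSet_Ioc (ae_of_all _ fun y hy => by
      rw [min_eq_left (by simp only [mem_Ioc] at hy; linarith [hy.2])])]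
    rw [lint_Ioc_ofReal ha (fun y => y) continuous_id
      (fun y hy => le_of_lt (lt_of_le_of_lt ha0 hy.1))]
    rw [integral_id]
  have e2 : ∫⁻ y in Ioc (π/4) (π/2 - a), ENNReal.ofReal (min y (π/2 - y))
      = ENNReal.ofReal (((π/4)^2 - a^2)/2) := by
    rw [setLIntegral_congr_fun_ae measurableSet_Ioc (ae_of_all _ fun y hy => by
      rw [min_eq_right (by simp only [mem_Ioc] at hy; linarith [hy.1])])]
    rw [lint_Ioc_ofReal (by linarith) (fun y => π/2 - y) (by fun_prop)
      (fun y hy => by simp only [mem_Ioc] at hy; linarith [hy.2])]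
    rw [show (∫ y in (π/4)..(π/2 - a), (π/2 - y)) = ∫ y in (π/2-(π/2-a))..(π/2-π/4), y from
      intervalIntegral.integral_comp_sub_left (fun u => u) (π/2)]
    rw [show π/2 - (π/2 - a) = a by ring, show π/2 - π/4 = π/4 by ring, integral_id]
  rw [e1, e2, ← ENNReal.ofReal_add (by nlinarith) (by nlinarith)]
  congr 1; ring

lemma volPE : volume PEPolyhedron = ENNReal.ofReal (π^3/48) := by
  have hpi := pi_pos
  rw [volume_eq_iter _ measPE, lintegral_congr innerPE]
  have hind : ∀ x : ℝ,
      (∫⁻ y in Icc (max (π/2 - x) (x - π/2)) (min x (π - x)),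
        ENNReal.ofReal (min y (π/2 - y)))
      = (Ioc (π/4) (3*π/4)).indicator (fun x =>
          ∫⁻ y in Icc (max (π/2 - x) (x - π/2)) (min x (π - x)),
            ENNReal.ofReal (min y (π/2 - y))) x := by
    intro x
    by_cases hx : x ∈ Ioc (π/4) (3*π/4)
    · rw [indicator_of_mem hx]
    · rw [indicator_of_notMem hx]
      simp only [mem_Ioc, not_and_or, not_lt, not_le] at hx
      have hz : volume (Icc (max (π/2 - x) (x - π/2)) (min x (π - x))) = 0 := by
        rw [Real.volume_Icc]
        apply ENNReal.ofReal_eq_zero.2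
        rcases hx with h | h
        · have := min_le_left x (π - x)
          have := le_max_left (π/2 - x) (x - π/2)
          linarith
        · have := min_le_right x (π - x)
          have := le_max_right (π/2 - x) (x - π/2)
          linarith
      exact setLIntegral_measure_zero _ _ hz
  rw [lintegral_congr hind, lintegral_indicator measurableSet_Ioc,
    ← Set.Ioc_union_Ioc_eq_Ioc (by linarith : π/4 ≤ π/2) (by linarith : π/2 ≤ 3*π/4),
    lintegral_union measurableSet_Ioc (Set.Ioc_disjoint_Ioc_of_le le_rfl)]
  have e1 : ∫⁻ x in Ioc (π/4) (π/2),
      ∫⁻ y in Icc (max (π/2 - x) (x - π/2)) (min x (π - x)),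
        ENNReal.ofReal (min y (π/2 - y)) = ENNReal.ofReal (π^3/96) := by
    rw [setLIntegral_congr_fun_ae (g := fun x => ENNReal.ofReal (π^2/16 - (π/2 - x)^2))
      measurableSet_Ioc (ae_of_all _ fun x hx => by
      simp only [mem_Ioc] at hx
      have h1 : max (π/2 - x) (x - π/2) = π/2 - x := max_eq_left (by linarith [hx.2])
      have h2 : min x (π - x) = x := min_eq_left (by linarith [hx.2])
      have h3 := Hval (a := π/2 - x) (by linarith [hx.2]) (by linarith [hx.1])
      rw [show π/2 - (π/2 - x) = x by ring] at h3
      rw [h1, h2, h3])]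
    rw [lint_Ioc_ofReal (by linarith) (fun x => π^2/16 - (π/2 - x)^2) (by fun_prop)
      (fun x hx => by simp only [mem_Ioc] at hx; nlinarith [hx.1, hx.2])]
    rw [show (∫ x in (π/4)..(π/2), (π^2/16 - (π/2 - x)^2))
        = ∫ u in (π/2-π/2)..(π/2-π/4), (π^2/16 - u^2) from
      intervalIntegral.integral_comp_sub_left (fun u => π^2/16 - u^2) (π/2)]
    rw [show π/2 - π/2 = (0:ℝ) by ring, show π/2 - π/4 = π/4 by ring,
      intervalIntegral.integral_sub intervalIntegrable_const
        (intervalIntegral.intervalIntegrable_pow 2),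
      intervalIntegral.integral_const, integral_pow]
    congr 1
    push_cast [smul_eq_mul]
    ring
  have e2 : ∫⁻ x in Ioc (π/2) (3*π/4),
      ∫⁻ y in Icc (max (π/2 - x) (x - π/2)) (min x (π - x)),
        ENNReal.ofReal (min y (π/2 - y)) = ENNReal.ofReal (π^3/96) := by
    rw [setLIntegral_congr_fun_ae (g := fun x => ENNReal.ofReal (π^2/16 - (x - π/2)^2))
      measurableSet_Ioc (ae_of_all _ fun x hx => by
      simp only [mem_Ioc] at hx
      have h1 : max (π/2 - x) (x - π/2) = x - π/2 := max_eq_right (by linarith [hx.1])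
      have h2 : min x (π - x) = π - x := min_eq_right (by linarith [hx.1])
      have h3 := Hval (a := x - π/2) (by linarith [hx.1]) (by linarith [hx.2])
      rw [show π/2 - (x - π/2) = π - x by ring] at h3
      rw [h1, h2, h3])]
    rw [lint_Ioc_ofReal (by linarith) (fun x => π^2/16 - (x - π/2)^2) (by fun_prop)
      (fun x hx => by simp only [mem_Ioc] at hx; nlinarith [hx.1, hx.2])]
    rw [show (∫ x in (π/2)..(3*π/4), (π^2/16 - (x - π/2)^2))
        = ∫ u in (π/2-π/2)..(3*π/4-π/2), (π^2/16 - u^2) from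
      intervalIntegral.integral_comp_sub_right (fun u => π^2/16 - u^2) (π/2)]
    rw [show π/2 - π/2 = (0:ℝ) by ring, show 3*π/4 - π/2 = π/4 by ring,
      intervalIntegral.integral_sub intervalIntegrable_const
        (intervalIntegral.intervalIntegrable_pow 2),
      intervalIntegral.integral_const, integral_pow]
    congr 1
    push_cast [smul_eq_mul]
    ring
  rw [e1, e2, ← ENNReal.ofReal_add (by positivity) (by positivity)]
  ring_nf

end AuxVolume

/-- The Weyl chamber has volume π³/24 and the polyhedron of perfect entanglers has
volume π³/48: perfect entanglers occupy exactly half of the Weyl chamber. -/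
theorem volume_weylChamber_and_pe :
    volume WeylChamber = ENNReal.ofReal (π ^ 3 / 24) ∧
    volume PEPolyhedron = ENNReal.ofReal (π ^ 3 / 48) := by
  exact ⟨volT, volPE⟩
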